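/- Let x̄ be optimal for the basis pursuit problem min ‖x‖₁ s.t. Ax = Ax̄. Then x̄ is optimal for (P_δ) with measurement vector b̂ if and only if there exists ȳ with −Aᵀȳ ∈ Sign(x̄) and b̂ ∈ Ax̄ − δ·Sign(ȳ). -/

import Mathlib

open Finset Pointwise

noncomputable def l1 {n : ℕ} (x : Fin n → ℝ) : ℝ := ∑ j, |x j|

noncomputable def linf {m : ℕ} (x : Fin m → ℝ) : ℝ := ⨆ i, |x i|

def SignSet {n : ℕ} (x : Fin n → ℝ) : Set (Fin n → ℝ) :=
  {ξ | (∀ j, |ξ j| ≤ 1) ∧ ∀ j, x j ≠ 0 → ξ j = Real.sign (x j)}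

def Feas {m n : ℕ} (A : Matrix (Fin m) (Fin n) ℝ) (b : Fin m → ℝ) (δ : ℝ)
    (x : Fin n → ℝ) : Prop := linf (A.mulVec x - b) ≤ δ

def IsOpt {m n : ℕ} (A : Matrix (Fin m) (Fin n) ℝ) (b : Fin m → ℝ) (δ : ℝ)
    (x : Fin n → ℝ) : Prop := Feas A b δ x ∧ ∀ z, Feas A b δ z → l1 x ≤ l1 z

def DualCert {m n : ℕ} (A : Matrix (Fin m) (Fin n) ℝ) (b : Fin m → ℝ) (δ : ℝ)
    (x : Fin n → ℝ) (y : Fin m → ℝ) : Prop :=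
  (-(A.transpose.mulVec y) ∈ SignSet x) ∧ (A.mulVec x - b ∈ δ • SignSet y)

/-!
Sufficiency is weak duality: for every feasible `z`,
`‖z‖₁ ≥ ⟨-Aᵀȳ, z⟩ = -⟨ȳ, b̂⟩ - ⟨ȳ, Az - b̂⟩ ≥ -⟨ȳ, b̂⟩ - δ‖ȳ‖₁`,
and both inequalities are equalities at `x̄` when `-Aᵀȳ ∈ Sign(x̄)` and `Ax̄ - b̂ = δη` with
`η ∈ Sign(ȳ)`.

Necessity is strong duality. With epigraph variables `t ≥ |x|`, problem `(P_δ)` becomes a linear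
program in `(x, t)`. At a minimizer no direction that keeps the active constraints satisfied can
decrease the objective, and Farkas' lemma turns this into nonnegative multipliers for the
active constraints. The multipliers of `±(Ax - b̂) ≤ δ` give `ȳ`, and those of `±x ≤ t`
give `-Aᵀȳ ∈ Sign(x̄)`.
-/

open Matrix

theorem farkas {ι α : Type*} [DecidableEq ι] [Fintype α] (v : ι → α → ℝ) (s : Finset ι)
    (c : α → ℝ) :
    (∃ t : ι → ℝ, 0 ≤ t ∧ ∑ i ∈ s, t i • v i = c) ∨
      ∃ d, (∀ i ∈ s, 0 ≤ v i ⬝ᵥ d) ∧ c ⬝ᵥ d < 0 := by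
  induction s using Finset.induction_on generalizing v c with
  | empty =>
    by_cases hc : c = 0
    · exact .inl ⟨0, le_rfl, by simp [hc]⟩
    · refine .inr ⟨-c, by simp, ?_⟩
      have hcc : 0 < c ⬝ᵥ c := (sum_nonneg fun i _ => mul_self_nonneg (c i)).lt_of_ne
        (Ne.symm (dotProduct_self_eq_zero.not.mpr hc))
      rw [dotProduct_neg]
      linarith
  | insert a s ha ih =>
    rcases ih v c with ⟨t, ht, hc⟩ | ⟨d, hd, hcd⟩
    · refine .inl ⟨Function.update t a 0, ?_, ?_⟩
      · intro i
        rcases eq_or_ne i a with rfl | hi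
        · simp
        · simpa [hi] using ht i
      · rw [sum_insert ha, Function.update_self, zero_smul, zero_add, ← hc]
        exact sum_congr rfl fun i hi => by rw [Function.update_of_ne (ne_of_mem_of_not_mem hi ha)]
    by_cases hda : 0 ≤ v a ⬝ᵥ d
    · exact .inr ⟨d, forall_mem_insert _ _ _ |>.mpr ⟨hda, hd⟩, hcd⟩
    push Not at hda
    -- project along `v a` onto the hyperplane `d⊥`, and recurse on the projected family
    set ρ : (α → ℝ) → ℝ := fun x => x ⬝ᵥ d / v a ⬝ᵥ d
    set P : (α → ℝ) → α → ℝ := fun x => x - ρ x • v a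
    rcases ih (fun i => P (v i)) (P c) with ⟨t, ht, hc⟩ | ⟨d', hd', hcd'⟩
    · refine .inl ⟨Function.update t a (ρ c - ∑ i ∈ s, t i * ρ (v i)), ?_, ?_⟩
      · intro i
        rcases eq_or_ne i a with rfl | hi
        · have hρc : 0 < ρ c := div_pos_of_neg_of_neg hcd hda
          have : ∑ i ∈ s, t i * ρ (v i) ≤ 0 := sum_nonpos fun i hi =>
            mul_nonpos_of_nonneg_of_nonpos (ht i) (div_nonpos_of_nonneg_of_nonpos (hd i hi) hda.le)
          simp only [Function.update_self, Pi.zero_apply]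
          linarith
        · simpa [hi] using ht i
      · have hs : ∑ i ∈ s, Function.update t a (ρ c - ∑ i ∈ s, t i * ρ (v i)) i • v i =
            ∑ i ∈ s, t i • v i :=
          sum_congr rfl fun i hi => by rw [Function.update_of_ne (ne_of_mem_of_not_mem hi ha)]
        rw [sum_insert ha, Function.update_self, hs]
        simp only [P, smul_sub, sum_sub_distrib, smul_smul, ← sum_smul] at hc
        linear_combination (norm := module) hc
    · have key : ∀ x, x ⬝ᵥ (d' - (v a ⬝ᵥ d' / v a ⬝ᵥ d) • d) = P x ⬝ᵥ d' := by
        intro x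
        simp only [P, ρ, dotProduct_sub, sub_dotProduct, dotProduct_smul, smul_dotProduct,
          smul_eq_mul]
        ring
      refine .inr ⟨d' - (v a ⬝ᵥ d' / v a ⬝ᵥ d) • d, forall_mem_insert _ _ _ |>.mpr ⟨?_, ?_⟩, ?_⟩
      · rw [key]
        simp [P, ρ, hda.ne]
      · exact fun i hi => (key _).symm ▸ hd' i hi
      · exact (key c).symm ▸ hcd'

open Filter Topology in
theorem exists_nonneg_vecMul_eq_of_isMinOn {κ α : Type*} [Fintype κ] [Fintype α]
    {M : Matrix κ α ℝ} {q : κ → ℝ} {c x : α → ℝ} (hx : q ≤ M *ᵥ x)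
    (hmin : IsMinOn (c ⬝ᵥ ·) {z | q ≤ M *ᵥ z} x) :
    ∃ u, 0 ≤ u ∧ (∀ k, u k ≠ 0 → (M *ᵥ x) k = q k) ∧ u ᵥ* M = c := by
  classical
  rcases farkas M {k | (M *ᵥ x) k = q k} c with ⟨t, ht, hc⟩ | ⟨d, hd, hcd⟩
  · refine ⟨fun k => if (M *ᵥ x) k = q k then t k else 0, fun k => ?_, fun k hk => ?_, ?_⟩
    · dsimp only
      split_ifs
      exacts [ht k, le_rfl]
    · by_contra h
      simp [h] at hk
    · rw [vecMul_eq_sum, ← hc, sum_filter]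
      simp only [ite_smul, zero_smul]
  -- otherwise `x + ε • d` is feasible and better than `x` for small `ε > 0`
  have hfeas : ∀ᶠ ε in 𝓝[>] (0 : ℝ), q ≤ M *ᵥ (x + ε • d) := by
    simp only [Pi.le_def, eventually_all, mulVec_add, mulVec_smul, Pi.add_apply, Pi.smul_apply,
      smul_eq_mul]
    intro k
    by_cases hk : (M *ᵥ x) k = q k
    · have hdk : 0 ≤ (M *ᵥ d) k := hd k (by simpa using hk)
      filter_upwards [self_mem_nhdsWithin] with ε (hε : 0 < ε)
      linarith [mul_nonneg hε.le hdk]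
    · have hlt : q k < (M *ᵥ x) k := lt_of_le_of_ne (hx k) (Ne.symm hk)
      have hcont : Tendsto (fun ε : ℝ => (M *ᵥ x) k + ε * (M *ᵥ d) k) (𝓝 0) (𝓝 ((M *ᵥ x) k)) :=
        Continuous.tendsto' (by fun_prop) _ _ (by simp)
      exact nhdsWithin_le_nhds ((hcont.eventually (lt_mem_nhds hlt)).mono fun _ h => h.le)
  obtain ⟨ε, hε, hεpos⟩ := (hfeas.and self_mem_nhdsWithin).exists
  have hle := isMinOn_iff.mp hmin _ hε
  simp only [dotProduct_add, dotProduct_smul, smul_eq_mul] at hle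
  linarith [mul_neg_of_pos_of_neg (show (0 : ℝ) < ε from hεpos) hcd]

lemma sub_mem_signSet {n : ℕ} {x p r : Fin n → ℝ} (hp : 0 ≤ p) (hr : 0 ≤ r) (hpr : p + r = 1)
    (hpx : ∀ j, p j ≠ 0 → 0 ≤ x j) (hrx : ∀ j, r j ≠ 0 → x j ≤ 0) : p - r ∈ SignSet x := by
  have hpr' (j : Fin n) : p j + r j = 1 := congrFun hpr j
  refine ⟨fun j => abs_le.mpr ⟨?_, ?_⟩, fun j hj => ?_⟩ <;> simp only [Pi.sub_apply]
  · linarith [hpr' j, show 0 ≤ p j from hp j]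
  · linarith [hpr' j, show 0 ≤ r j from hr j]
  rcases hj.lt_or_gt with hneg | hpos
  · have : p j = 0 := by_contra fun h => (hpx j h).not_gt hneg
    rw [Real.sign_of_neg hneg]
    linarith [hpr' j]
  · have : r j = 0 := by_contra fun h => (hrx j h).not_gt hpos
    rw [Real.sign_of_pos hpos]
    linarith [hpr' j]

theorem exists_nonneg_mulVec_mem_signSet_of_isMinOn {κ : Type*} [Fintype κ] {n : ℕ}
    {M : Matrix κ (Fin n) ℝ} {q : κ → ℝ} {x : Fin n → ℝ} (hx : q ≤ M *ᵥ x)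
    (hmin : IsMinOn l1 {z | q ≤ M *ᵥ z} x) :
    ∃ u, 0 ≤ u ∧ (∀ k, u k ≠ 0 → (M *ᵥ x) k = q k) ∧ Mᵀ *ᵥ u ∈ SignSet x := by
  -- the epigraph variables `t ≥ |x|` turn the problem into a linear program in `(x, t)`
  set L : Matrix ((Fin n ⊕ Fin n) ⊕ κ) (Fin n ⊕ Fin n) ℝ :=
    fromRows (fromBlocks (-1 : Matrix (Fin n) (Fin n) ℝ) 1 1 1) (fromCols M 0)
  have hL (y t : Fin n → ℝ) :
      L *ᵥ Sum.elim y t = Sum.elim (Sum.elim (t - y) (y + t)) (M *ᵥ y) := by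
    simp [L, fromBlocks_mulVec, neg_mulVec, neg_add_eq_sub]
  have hLfeas (y t : Fin n → ℝ) :
      Sum.elim (0 : Fin n ⊕ Fin n → ℝ) q ≤ L *ᵥ Sum.elim y t ↔ (∀ j, |y j| ≤ t j) ∧ q ≤ M *ᵥ y := by
    simp [hL, Pi.le_def, abs_le, forall_and, neg_le_iff_add_nonneg, and_comm]
  have hobj (y t : Fin n → ℝ) : Sum.elim (0 : Fin n → ℝ) 1 ⬝ᵥ Sum.elim y t = ∑ j, t j := by
    simp [sumElim_dotProduct_sumElim, one_dotProduct]
  obtain ⟨u, hu, hcompl, huL⟩ := exists_nonneg_vecMul_eq_of_isMinOn (M := L) (q := Sum.elim 0 q)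
      (c := Sum.elim (0 : Fin n → ℝ) 1) (x := Sum.elim x |x|)
      ((hLfeas _ _).mpr ⟨fun j => le_rfl, hx⟩) <| by
      intro z hz
      rw [← Sum.elim_comp_inl_inr z] at hz ⊢
      obtain ⟨hzt, hzM⟩ := (hLfeas _ _).mp hz
      simp only [Set.mem_ofPred_eq, hobj]
      calc ∑ j, |x| j = l1 x := rfl
        _ ≤ l1 (z ∘ Sum.inl) := isMinOn_iff.mp hmin _ hzM
        _ ≤ ∑ j, (z ∘ Sum.inr) j := sum_le_sum fun j _ => hzt j
  obtain ⟨p, r, w, rfl⟩ : ∃ p r w, u = Sum.elim (Sum.elim p r) w :=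
    ⟨_, _, _, by ext ((j | j) | k) <;> rfl⟩
  simp only [hL, Sum.forall, Sum.elim_inl, Sum.elim_inr, Pi.sub_apply, Pi.add_apply,
    Pi.abs_apply, Pi.zero_apply, sub_eq_zero] at hcompl
  simp only [L, sumElim_vecMul_fromRows, vecMul_fromBlocks, vecMul_fromCols, vecMul_neg,
    vecMul_one, vecMul_zero, Sum.elim_comp_inl, Sum.elim_comp_inr, ← Sum.elim_add_add,
    Sum.elim_eq_iff, add_zero] at huL
  refine ⟨w, fun k => hu (.inr k), hcompl.2, ?_⟩
  have hwM : Mᵀ *ᵥ w = p - r := by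
    rw [mulVec_transpose]
    linear_combination huL.1
  rw [hwM]
  exact sub_mem_signSet (fun j => hu (.inl (.inl j))) (fun j => hu (.inl (.inr j))) huL.2
    (fun j hj => abs_eq_self.mp (hcompl.1.1 j hj))
    (fun j hj => abs_eq_neg_self.mp (eq_neg_of_add_eq_zero_right (hcompl.1.2 j hj)))

lemma Real.abs_sign_le_one (r : ℝ) : |Real.sign r| ≤ 1 := by
  rcases Real.sign_apply_eq r with h | h | h <;> simp [h]

lemma Real.sign_mul_self (r : ℝ) : Real.sign r * r = |r| := by
  rcases lt_trichotomy r 0 with h | rfl | h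
  · simp [Real.sign_of_neg h, abs_of_neg h]
  · simp
  · simp [Real.sign_of_pos h, abs_of_pos h]

lemma dotProduct_le_mul_l1 {n : ℕ} {w y : Fin n → ℝ} {δ : ℝ} (hw : ∀ i, |w i| ≤ δ) :
    w ⬝ᵥ y ≤ δ * l1 y := by
  rw [l1, mul_sum]
  refine sum_le_sum fun i _ => ?_
  calc w i * y i ≤ |w i| * |y i| := (le_abs_self _).trans (abs_mul _ _).le
    _ ≤ δ * |y i| := mul_le_mul_of_nonneg_right (hw i) (abs_nonneg _)

lemma dotProduct_eq_l1_of_mem_signSet {n : ℕ} {ξ x : Fin n → ℝ} (h : ξ ∈ SignSet x) :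
    ξ ⬝ᵥ x = l1 x := by
  refine sum_congr rfl fun j _ => ?_
  by_cases hj : x j = 0
  · simp [hj]
  · rw [h.2 j hj, Real.sign_mul_self]

lemma linf_le_iff {m : ℕ} {x : Fin m → ℝ} {δ : ℝ} (hδ : 0 ≤ δ) :
    linf x ≤ δ ↔ ∀ i, |x i| ≤ δ :=
  ⟨fun h i => (le_ciSup (Set.finite_range _).bddAbove i).trans h, fun h => Real.iSup_le h hδ⟩

lemma feas_iff_le_fromRows_mulVec {m n : ℕ} {A : Matrix (Fin m) (Fin n) ℝ} {b : Fin m → ℝ}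
    {δ : ℝ} {x : Fin n → ℝ} (hδ : 0 ≤ δ) :
    Feas A b δ x ↔ Sum.elim (fun i => b i - δ) (fun i => -b i - δ) ≤ fromRows A (-A) *ᵥ x := by
  simp only [Feas, linf_le_iff hδ, fromRows_mulVec, Pi.le_def, Sum.forall, Sum.elim_inl,
    Sum.elim_inr, abs_le, forall_and, Pi.sub_apply, neg_mulVec, Pi.neg_apply]
  exact and_congr (forall_congr' fun i => by constructor <;> intro h <;> linarith)
    (forall_congr' fun i => by constructor <;> intro h <;> linarith)

lemma exists_mem_signSet_smul_eq {m : ℕ} {w y : Fin m → ℝ} {δ : ℝ} (hw : ∀ i, |w i| ≤ δ)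
    (hwy : ∀ i, y i ≠ 0 → w i = δ * Real.sign (y i)) : ∃ η ∈ SignSet y, w = δ • η := by
  -- for `δ = 0`, `w i / δ` is the junk value `0`, which is still right since then `w = 0`
  refine ⟨fun i => if y i = 0 then w i / δ else Real.sign (y i), ⟨fun i => ?_, fun i hi => ?_⟩, ?_⟩
  · dsimp only
    split_ifs
    · rw [abs_div]
      exact div_le_one_of_le₀ ((hw i).trans (le_abs_self δ)) (abs_nonneg δ)
    · exact Real.abs_sign_le_one _
  · simp [hi]
  · funext i
    simp only [Pi.smul_apply, smul_eq_mul]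
    split_ifs with hi
    · rcases eq_or_ne δ 0 with rfl | hδ
      · simpa using hw i
      · field_simp
    · exact hwy i hi

theorem exists_dual_of_isOpt {m n : ℕ} {A : Matrix (Fin m) (Fin n) ℝ} {b : Fin m → ℝ} {δ : ℝ}
    {x : Fin n → ℝ} (hδ : 0 ≤ δ) (hopt : IsOpt A b δ x) :
    ∃ y, ∃ η ∈ SignSet y, -(Aᵀ *ᵥ y) ∈ SignSet x ∧ b = A *ᵥ x - δ • η := by
  obtain ⟨u, hu, hcompl, hsign⟩ := exists_nonneg_mulVec_mem_signSet_of_isMinOn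
    ((feas_iff_le_fromRows_mulVec hδ).mp hopt.1)
    (isMinOn_iff.mpr fun z hz => hopt.2 z ((feas_iff_le_fromRows_mulVec hδ).mpr hz))
  obtain ⟨μ, ν, rfl⟩ : ∃ μ ν, u = Sum.elim μ ν := ⟨_, _, (Sum.elim_comp_inl_inr u).symm⟩
  have hAt : (fromRows A (-A))ᵀ *ᵥ Sum.elim μ ν = -(Aᵀ *ᵥ (ν - μ)) := by
    simp only [mulVec_transpose, sumElim_vecMul_fromRows, vecMul_neg, sub_vecMul]
    abel
  have hw : ∀ i, |(A *ᵥ x - b) i| ≤ δ := (linf_le_iff hδ).mp hopt.1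
  obtain ⟨η, hη, hwη⟩ := exists_mem_signSet_smul_eq (y := ν - μ) hw fun i hi => by
    have hμ : 0 ≤ μ i := hu (.inl i)
    have hν : 0 ≤ ν i := hu (.inr i)
    simp only [Pi.sub_apply] at hi ⊢
    rcases hi.lt_or_gt with hneg | hpos
    · have h := hcompl (.inl i) (show 0 < μ i by linarith).ne'
      simp only [fromRows_mulVec, Sum.elim_inl] at h
      rw [Real.sign_of_neg hneg]
      linarith
    · have h := hcompl (.inr i) (show 0 < ν i by linarith).ne'
      simp only [fromRows_mulVec, neg_mulVec, Sum.elim_inr, Pi.neg_apply] at h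
      rw [Real.sign_of_pos hpos]
      linarith
  exact ⟨ν - μ, η, hη, hAt ▸ hsign, by rw [← hwη]; abel⟩

theorem isOpt_of_dual {m n : ℕ} {A : Matrix (Fin m) (Fin n) ℝ} {b : Fin m → ℝ} {δ : ℝ}
    {x : Fin n → ℝ} {y η : Fin m → ℝ} (hδ : 0 ≤ δ) (hη : η ∈ SignSet y)
    (hξ : -(Aᵀ *ᵥ y) ∈ SignSet x) (hb : b = A *ᵥ x - δ • η) : IsOpt A b δ x := by
  have hAxb : A *ᵥ x - b = δ • η := by rw [hb]; abel
  refine ⟨(linf_le_iff hδ).mpr fun i => ?_, fun z hz => ?_⟩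
  · rw [hAxb, Pi.smul_apply, smul_eq_mul, abs_mul, abs_of_nonneg hδ]
    exact mul_le_of_le_one_right hδ (hη.1 i)
  -- weak duality, with equality at `x`
  have hdual (v : Fin n → ℝ) : -(Aᵀ *ᵥ y) ⬝ᵥ v = -(y ⬝ᵥ b) - y ⬝ᵥ (A *ᵥ v - b) := by
    rw [neg_dotProduct, mulVec_transpose, ← dotProduct_mulVec, dotProduct_sub]
    ring
  have hx : y ⬝ᵥ (A *ᵥ x - b) = δ * l1 y := by
    rw [hAxb, dotProduct_smul, dotProduct_comm, dotProduct_eq_l1_of_mem_signSet hη, smul_eq_mul]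
  have hz' : y ⬝ᵥ (A *ᵥ z - b) ≤ δ * l1 y :=
    dotProduct_comm y _ ▸ dotProduct_le_mul_l1 ((linf_le_iff hδ).mp hz)
  have hzl1 : -(Aᵀ *ᵥ y) ⬝ᵥ z ≤ l1 z := by
    simpa [mul_one] using dotProduct_le_mul_l1 (δ := 1) (y := z) hξ.1
  rw [← dotProduct_eq_l1_of_mem_signSet hξ, hdual, hx]
  rw [hdual] at hzl1
  linarith

theorem bp_solution_optimal_iff_general {m n : ℕ} (A : Matrix (Fin m) (Fin n) ℝ)
    (xbar : Fin n → ℝ) (bhat : Fin m → ℝ) (δ : ℝ) (hδ : 0 ≤ δ) :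
    IsOpt A bhat δ xbar ↔
      ∃ ybar : Fin m → ℝ, ∃ η ∈ SignSet ybar,
        -(A.transpose.mulVec ybar) ∈ SignSet xbar ∧
        bhat = A.mulVec xbar - δ • η :=
  ⟨exists_dual_of_isOpt hδ, fun ⟨_, _, hη, hξ, hb⟩ => isOpt_of_dual hδ hη hξ hb⟩

theorem bp_solution_optimal_iff {m n : ℕ} (A : Matrix (Fin m) (Fin n) ℝ)
    (xbar : Fin n → ℝ) (bhat : Fin m → ℝ) (δ : ℝ) (hδ : 0 ≤ δ)
    (hBP : ∀ z : Fin n → ℝ, A.mulVec z = A.mulVec xbar → l1 xbar ≤ l1 z) :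
    IsOpt A bhat δ xbar ↔
      ∃ ybar : Fin m → ℝ, ∃ η ∈ SignSet ybar,
        -(A.transpose.mulVec ybar) ∈ SignSet xbar ∧
        bhat = A.mulVec xbar - δ • η :=
  bp_solution_optimal_iff_general A xbar bhat δ hδ
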